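/- arXiv:1805.01771 — 3 statements merged into one kernel-verified Lean document; each statement's English description precedes it below -/
import Mathlib

section
/- Let G be a connected finite simple graph on n ≥ 3 vertices with degree sequence d_1 ≥ d_2 ≥ ... ≥ d_n. If G has a cut vertex, then d_2 + d_n ≤ n − 1. Equivalently, if d_2 + d_n ≥ n, then G is 2-connected. -/
/-!
Removing a cut vertex `v` splits the other `n - 1` vertices into two nonempty sides `S` and `T`
with no edges between them, so a vertex of `S` has all its neighbours in `S ∪ {v}` minus itself,
hence degree at most `|S|`; likewise for `T`. The minimum degree is therefore at most
`min |S| |T|`, and one of the two vertices of largest degree differs from `v`, so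
`d₂ ≤ max |S| |T|`. Adding up, `d₂ + dₙ ≤ |S| + |T| = n - 1`.
-/

open SimpleGraph

def TwoConnected {V : Type*} [Fintype V] (G : SimpleGraph V) : Prop :=
  G.Connected ∧ 3 ≤ Fintype.card V ∧ ∀ v : V, (G.induce ({v}ᶜ : Set V)).Connected

namespace SimpleGraph

variable {V : Type*} (G : SimpleGraph V)

/-- `S` is a union of vertex sets of connected components of `G - v`. -/
def IsClosedInDelete (v : V) (S : Finset V) : Prop :=
  v ∉ S ∧ ∀ ⦃w z⦄, w ∈ S → G.Adj w z → z ≠ v → z ∈ S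

variable {G} [Fintype V] [DecidableEq V]

theorem IsClosedInDelete.compl {v : V} {S : Finset V} (hS : G.IsClosedInDelete v S) :
    G.IsClosedInDelete v (Finset.univ.erase v \ S) := by
  refine ⟨by simp, fun w z hw hwz hzv => ?_⟩
  simp only [Finset.mem_sdiff, Finset.mem_erase, Finset.mem_univ, and_true] at hw ⊢
  exact ⟨hzv, fun hz => hw.2 (hS.2 hz hwz.symm hw.1)⟩

theorem IsClosedInDelete.degree_le_card [DecidableRel G.Adj] {v u : V} {S : Finset V}
    (hS : G.IsClosedInDelete v S) (hu : u ∈ S) : G.degree u ≤ S.card := by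
  have hsub : G.neighborFinset u ⊆ insert v (S.erase u) := by
    intro z hz
    rw [mem_neighborFinset] at hz
    by_cases hzv : z = v
    · simp [hzv]
    · exact Finset.mem_insert_of_mem (Finset.mem_erase.2 ⟨hz.ne.symm, hS.2 hu hz hzv⟩)
  calc G.degree u = (G.neighborFinset u).card := (card_neighborFinset_eq_degree G u).symm
    _ ≤ (insert v (S.erase u)).card := Finset.card_le_card hsub
    _ ≤ (S.erase u).card + 1 := Finset.card_insert_le v _
    _ = S.card := Finset.card_erase_add_one hu

theorem exists_isClosedInDelete_of_not_connected_induce [Nontrivial V] {v : V}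
    (hv : ¬ (G.induce ({v}ᶜ : Set V)).Connected) :
    ∃ S : Finset V, G.IsClosedInDelete v S ∧ S.Nonempty ∧ (Finset.univ.erase v \ S).Nonempty := by
  classical
  set H := G.induce ({v}ᶜ : Set V)
  obtain ⟨w, hw⟩ := exists_ne v
  have : Nonempty ({v}ᶜ : Set V) := ⟨⟨w, hw⟩⟩
  obtain ⟨x, y, hxy⟩ : ∃ x y : ({v}ᶜ : Set V), ¬ H.Reachable x y := by
    by_contra! h
    exact hv ((connected_iff H).2 ⟨h, inferInstance⟩)
  refine ⟨Finset.univ.filter fun w => ∃ h : w ≠ v, H.Reachable x ⟨w, h⟩, ⟨by simp, ?_⟩,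
    ⟨x, Finset.mem_filter.2 ⟨Finset.mem_univ _, x.2, Reachable.rfl⟩⟩, ⟨y, ?_⟩⟩
  · simp only [Finset.mem_filter, Finset.mem_univ, true_and]
    rintro w z ⟨hwv, hxw⟩ hwz hzv
    exact ⟨hzv, hxw.trans (Adj.reachable (G := H) hwz)⟩
  · simp only [Finset.mem_sdiff, Finset.mem_erase, Finset.mem_univ, Finset.mem_filter, true_and,
      and_true, not_exists]
    exact ⟨y.2, fun _ h => hxy h⟩

theorem IsClosedInDelete.card_add_card_compl {v : V} {S : Finset V}
    (hS : G.IsClosedInDelete v S) :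
    S.card + (Finset.univ.erase v \ S).card = Fintype.card V - 1 := by
  have hsub : S ⊆ Finset.univ.erase v := fun w hw =>
    Finset.mem_erase.2 ⟨fun h => hS.1 (h ▸ hw), Finset.mem_univ w⟩
  rw [Finset.card_sdiff_of_subset hsub, Finset.card_erase_of_mem (Finset.mem_univ v),
    Finset.card_univ, Nat.add_sub_cancel' (by simpa using Finset.card_le_card hsub)]

end SimpleGraph

section DegreeSequence

variable {V : Type*} {n : ℕ} {d : Fin n → ℕ} {f : V → ℕ}

theorem le_of_antitone_of_last (hd : Antitone d) (σ : Fin n ≃ V) (hf : ∀ i, f (σ i) = d i)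
    (h : n - 1 < n) (u : V) : d ⟨n - 1, h⟩ ≤ f u := by
  rw [← σ.apply_symm_apply u, hf]
  exact hd (Fin.le_def.2 (by simp only; omega))

theorem exists_ne_le_of_antitone_of_second (hd : Antitone d) (σ : Fin n ≃ V)
    (hf : ∀ i, f (σ i) = d i) (h : 1 < n) (v : V) : ∃ u ≠ v, d ⟨1, h⟩ ≤ f u := by
  have h0 : σ ⟨0, by omega⟩ ≠ σ ⟨1, h⟩ := σ.injective.ne (by simp [Fin.ext_iff])
  by_cases hv : σ ⟨1, h⟩ = v
  · exact ⟨σ ⟨0, by omega⟩, hv ▸ h0, by rw [hf]; exact hd (Fin.le_def.2 (by simp))⟩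
  · exact ⟨σ ⟨1, h⟩, hv, (hf _).ge⟩

end DegreeSequence

namespace SimpleGraph

variable {V : Type*} [Fintype V] [DecidableEq V] {G : SimpleGraph V} [DecidableRel G.Adj]

theorem second_add_last_le_of_not_connected_induce {n : ℕ} (h : 1 < n) {d : Fin n → ℕ}
    (hd : Antitone d) (σ : Fin n ≃ V) (hσ : ∀ i, G.degree (σ i) = d i) {v : V}
    (hv : ¬ (G.induce ({v}ᶜ : Set V)).Connected) :
    d ⟨1, h⟩ + d ⟨n - 1, by omega⟩ ≤ n - 1 := by
  have : Nontrivial V := σ.nontrivial_congr.1 (Fin.nontrivial_iff_two_le.2 h)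
  obtain ⟨S, hS, ⟨x, hx⟩, ⟨y, hy⟩⟩ := exists_isClosedInDelete_of_not_connected_induce hv
  have hcard := hS.card_add_card_compl
  rw [← Fintype.card_congr σ, Fintype.card_fin] at hcard
  have hlast := le_of_antitone_of_last (f := fun u => G.degree u) hd σ hσ (by omega)
  have hxS := (hlast x).trans (hS.degree_le_card hx)
  have hyT := (hlast y).trans (hS.compl.degree_le_card hy)
  obtain ⟨u, huv, hu⟩ :=
    exists_ne_le_of_antitone_of_second (f := fun u => G.degree u) hd σ hσ h v
  by_cases huS : u ∈ S
  · have := hu.trans (hS.degree_le_card huS)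
    omega
  · have := hu.trans (hS.compl.degree_le_card (by simp [huv, huS]))
    omega

end SimpleGraph

/-- For a connected graph on `n ≥ 3` vertices with non-increasing degree sequence `d`:
if `G` has a cut vertex then `d₂ + dₙ ≤ n - 1`; equivalently if `d₂ + dₙ ≥ n` then `G`
is 2-connected. -/
theorem stmt_1 {n : ℕ} (hn : 3 ≤ n) (G : SimpleGraph (Fin n)) [DecidableRel G.Adj]
    (hconn : G.Connected) (d : Fin n → ℕ) (hd : Antitone d)
    (σ : Equiv.Perm (Fin n)) (hreal : ∀ i, G.degree (σ i) = d i) :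
    ((∃ v : Fin n, ¬ (G.induce ({v}ᶜ : Set (Fin n))).Connected) →
      d ⟨1, by omega⟩ + d ⟨n - 1, by omega⟩ ≤ n - 1) ∧
    (n ≤ d ⟨1, by omega⟩ + d ⟨n - 1, by omega⟩ → TwoConnected G) := by
  have cut_bound (v : Fin n) (hv : ¬ (G.induce ({v}ᶜ : Set (Fin n))).Connected) :=
    second_add_last_le_of_not_connected_induce (by omega) hd σ hreal hv
  refine ⟨fun ⟨v, hv⟩ => cut_bound v hv, fun hsum => ⟨hconn, by simpa using hn, fun v => ?_⟩⟩
  by_contra hv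
  have := cut_bound v hv
  omega
end

section
/- For every even n ≥ 4, the constant sequence (n/2, n/2, ..., n/2) of length n is a graphical degree sequence and every realization of it is 2-connected; that is, every (n/2)-regular simple graph on n vertices is 2-connected. -/
open SimpleGraph Finset

namespace SimpleGraph

section CommonNeighbors

variable {V : Type*} (G : SimpleGraph V)

theorem induce_connected_of_exists_common_neighbor {s : Set V} (hs : s.Nonempty)
    (h : ∀ u ∈ s, ∀ w ∈ s, u ≠ w → ¬G.Adj u w → ∃ x ∈ s, G.Adj u x ∧ G.Adj w x) :
    (G.induce s).Connected := by
  have : Nonempty s := hs.to_subtype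
  refine ⟨fun ⟨u, hu⟩ ⟨w, hw⟩ => ?_⟩
  by_cases huw : u = w
  · subst huw; rfl
  by_cases hadj : G.Adj u w
  · exact Adj.reachable (G := G.induce s) hadj
  obtain ⟨x, hx, hux, hwx⟩ := h u hu w hw huw hadj
  exact (Adj.reachable (G := G.induce s) (u := ⟨u, hu⟩) (v := ⟨x, hx⟩) hux).trans
    (Adj.reachable (G := G.induce s) (u := ⟨x, hx⟩) (v := ⟨w, hw⟩) hwx.symm)

variable [Fintype V] [DecidableRel G.Adj]

theorem degree_add_degree_add_two_le_card_add_card_inter [DecidableEq V] {u w : V}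
    (huw : u ≠ w) (hadj : ¬G.Adj u w) :
    G.degree u + G.degree w + 2 ≤
      Fintype.card V + #(G.neighborFinset u ∩ G.neighborFinset w) := by
  have hsub : G.neighborFinset u ∪ G.neighborFinset w ⊆ univ \ {u, w} := by
    intro x hx
    simp only [mem_union, mem_neighborFinset] at hx
    simp only [mem_sdiff, mem_univ, true_and, mem_insert, mem_singleton, not_or]
    rcases hx with hx | hx
    · exact ⟨hx.ne', fun h => hadj (h ▸ hx)⟩
    · exact ⟨fun h => hadj (h ▸ hx).symm, hx.ne'⟩
  have hcard := card_le_card hsub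
  have hpair := card_le_univ ({u, w} : Finset V)
  rw [card_univ_sdiff] at hcard
  rw [card_pair huw] at hcard hpair
  have := card_union_add_card_inter (G.neighborFinset u) (G.neighborFinset w)
  simp only [card_neighborFinset_eq_degree] at this
  omega

theorem exists_common_neighbor_ne_of_card_le_degree_add_degree {u w : V}
    (huw : u ≠ w) (hadj : ¬G.Adj u w) (hdeg : Fintype.card V ≤ G.degree u + G.degree w)
    (v : V) : ∃ x ≠ v, G.Adj u x ∧ G.Adj w x := by
  classical
  have := G.degree_add_degree_add_two_le_card_add_card_inter huw hadj
  obtain ⟨x, hx, hxv⟩ :=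
    exists_mem_ne (s := G.neighborFinset u ∩ G.neighborFinset w) (by omega) v
  rw [mem_inter, mem_neighborFinset, mem_neighborFinset] at hx
  exact ⟨x, hxv, hx⟩

theorem twoConnected_of_card_le_two_mul_degree (hcard : 3 ≤ Fintype.card V)
    (hdeg : ∀ v, Fintype.card V ≤ 2 * G.degree v) : TwoConnected G := by
  have common (v : V) {u w : V} (huw : u ≠ w) (hadj : ¬G.Adj u w) :
      ∃ x ≠ v, G.Adj u x ∧ G.Adj w x :=
    G.exists_common_neighbor_ne_of_card_le_degree_add_degree huw hadj
      (by have := hdeg u; have := hdeg w; omega) v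
  refine ⟨?_, hcard, fun v => ?_⟩
  · have : Nonempty V := Fintype.card_pos_iff.mp (by omega)
    rw [← G.induceUnivIso.connected_iff]
    refine G.induce_connected_of_exists_common_neighbor Set.univ_nonempty
      fun u _ w _ huw hadj => ?_
    obtain ⟨x, -, hx⟩ := common u huw hadj
    exact ⟨x, trivial, hx⟩
  · obtain ⟨w, hw⟩ := Fintype.exists_ne_of_one_lt_card (by omega) v
    exact G.induce_connected_of_exists_common_neighbor ⟨w, hw⟩
      fun u _ w _ huw hadj => common v huw hadj

end CommonNeighbors

section CompleteBipartite

variable {α β : Type*} [Fintype α] [Fintype β] [DecidableRel (completeBipartiteGraph α β).Adj]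

theorem completeBipartiteGraph_degree_inl (a : α) :
    (completeBipartiteGraph α β).degree (.inl a) = Fintype.card β := by
  rw [← card_neighborFinset_eq_degree, neighborFinset_eq_filter,
    show ({w | (completeBipartiteGraph α β).Adj (.inl a) w} : Finset (α ⊕ β)) = univ.map .inr by
      ext (w | w) <;> simp]
  simp

theorem completeBipartiteGraph_degree_inr (b : β) :
    (completeBipartiteGraph α β).degree (.inr b) = Fintype.card α := by
  rw [← card_neighborFinset_eq_degree, neighborFinset_eq_filter,
    show ({w | (completeBipartiteGraph α β).Adj (.inr b) w} : Finset (α ⊕ β)) = univ.map .inl by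
      ext (w | w) <;> simp]
  simp

theorem completeBipartiteGraph_isRegularOfDegree {γ : Type*} [Fintype γ]
    [DecidableRel (completeBipartiteGraph γ γ).Adj] :
    (completeBipartiteGraph γ γ).IsRegularOfDegree (Fintype.card γ) := by
  rintro (a | b)
  · exact completeBipartiteGraph_degree_inl a
  · exact completeBipartiteGraph_degree_inr b

theorem exists_isRegularOfDegree_fin_add (m : ℕ) :
    ∃ (G : SimpleGraph (Fin (m + m))) (_ : DecidableRel G.Adj), G.IsRegularOfDegree m := by
  classical
  let K := completeBipartiteGraph (Fin m) (Fin m)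
  refine ⟨K.comap finSumFinEquiv.symm, inferInstance, fun v => ?_⟩
  rw [← (Iso.comap finSumFinEquiv.symm K).degree_eq v]
  convert completeBipartiteGraph_isRegularOfDegree (finSumFinEquiv.symm v) <;>
    simp [Iso.comap_apply]

end CompleteBipartite

end SimpleGraph

/-- For every even `n ≥ 4`, the constant sequence `(n/2, ..., n/2)` of length `n` is
graphical and every realization of it, i.e. every `(n/2)`-regular simple graph on `n`
vertices, is 2-connected. -/
theorem stmt_11 {n : ℕ} (hn : 4 ≤ n) (heven : Even n) :
    (∃ (G : SimpleGraph (Fin n)) (_ : DecidableRel G.Adj), ∀ v, G.degree v = n / 2) ∧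
    (∀ (G : SimpleGraph (Fin n)) (_ : DecidableRel G.Adj),
      (∀ v, G.degree v = n / 2) → TwoConnected G) := by
  obtain ⟨m, rfl⟩ := heven
  refine ⟨?_, fun G _ hdeg => G.twoConnected_of_card_le_two_mul_degree
    (by simp only [Fintype.card_fin]; omega) fun v => by simp only [Fintype.card_fin, hdeg]; omega⟩
  obtain ⟨G, _, hG⟩ := exists_isRegularOfDegree_fin_add m
  exact ⟨G, _, fun v => by rw [hG.degree_eq]; omega⟩
end

section
/- Let G be a finite simple graph on n vertices whose degree sequence in non-increasing order d_1 ≥ ... ≥ d_n satisfies d_n ≥ 1 and d_{n−s+1} > s for every integer s with d_n ≤ s ≤ ⌊(n−1)/2⌋. If G is connected, then G has no cut vertex whose removal separates G into exactly two connected pieces; in particular, if additionally G is connected and n ≥ 3, then G is 2-connected whenever every cut-vertex separation has exactly two sides. -/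
/-!
Let `v` separate `G` into sides `A` and `B` with `s := #A ≤ #B`, so `s ≤ (n - 1) / 2`. Every
neighbour of a vertex of `A` lies in `A ∪ {v}`, so the `s` vertices of `A` have degree at most
`s`; hence the degree in position `n - s` of the non-increasing sequence is at most `s`, and so
is the minimum degree. This contradicts the hypothesis on `d` at this `s`.
-/

open SimpleGraph Finset

theorem Fin.exists_mem_val_add_card_le {n : ℕ} {S : Finset (Fin n)} (hS : S.Nonempty) :
    ∃ i ∈ S, (i : ℕ) + #S ≤ n := by
  refine ⟨S.min' hS, S.min'_mem hS, ?_⟩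
  have : #S ≤ #(Ici (S.min' hS)) := card_le_card fun i hi ↦ mem_Ici.2 (S.min'_le i hi)
  rw [Fin.card_Ici] at this
  omega

theorem Antitone.le_of_le_add_card {n s : ℕ} {d : Fin n → ℕ} (hd : Antitone d)
    {S : Finset (Fin n)} (hS : S.Nonempty) (hle : ∀ i ∈ S, d i ≤ s) {j : Fin n}
    (hj : n ≤ j + #S) : d j ≤ s := by
  obtain ⟨i, hi, hin⟩ := Fin.exists_mem_val_add_card_le hS
  exact (hd (Fin.le_iff_val_le_val.2 (by omega))).trans (hle i hi)

namespace SimpleGraph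

variable {V : Type*} {G : SimpleGraph V}

theorem neighborSet_subset_insert_of_separates {A B : Set V} {v a : V}
    (hunion : A ∪ B = {v}ᶜ) (hsep : ∀ a ∈ A, ∀ b ∈ B, ¬ G.Adj a b) (ha : a ∈ A) :
    G.neighborSet a ⊆ insert v A := by
  intro b hb
  by_cases hbv : b = v
  · exact .inl hbv
  · have : b ∈ A ∪ B := hunion ▸ hbv
    exact .inr (this.resolve_right (hsep a ha b · hb))

theorem degree_le_card_of_neighborSet_subset [DecidableEq V] {A : Finset V} {a v : V}
    [Fintype (G.neighborSet a)] (ha : a ∈ A) (h : G.neighborSet a ⊆ insert v ↑A) :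
    G.degree a ≤ #A := by
  have hsub : G.neighborFinset a ⊆ insert v (A.erase a) := by
    intro b hb
    rw [mem_neighborFinset] at hb
    rcases h hb with rfl | hbA
    · exact mem_insert_self _ _
    · exact mem_insert_of_mem (mem_erase.2 ⟨(G.ne_of_adj hb).symm, hbA⟩)
  calc G.degree a ≤ #(insert v (A.erase a)) := card_le_card hsub
    _ ≤ #(A.erase a) + 1 := card_insert_le _ _
    _ = #A := card_erase_add_one ha

end SimpleGraph

/-- If the non-increasing degree sequence `d` of a graph `G` on `n` vertices satisfies
`dₙ ≥ 1` and `d_{n-s+1} > s` for every `s` with `dₙ ≤ s ≤ ⌊(n-1)/2⌋`, then, if `G` is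
connected, no cut vertex of `G` separates it into exactly two pieces. -/
theorem stmt_12 {n : ℕ} (hn : 3 ≤ n) (G : SimpleGraph (Fin n)) [DecidableRel G.Adj]
    (d : Fin n → ℕ) (hd : Antitone d)
    (σ : Equiv.Perm (Fin n)) (hreal : ∀ i, G.degree (σ i) = d i)
    (hbig : ∀ s : ℕ, (hs1 : 1 ≤ s) → (hs2 : d ⟨n - 1, by omega⟩ ≤ s) →
      (hs3 : s ≤ (n - 1) / 2) → s < d ⟨n - s, by omega⟩) :
    G.Connected →
      ¬ ∃ (v : Fin n) (A B : Set (Fin n)), A.Nonempty ∧ B.Nonempty ∧ Disjoint A B ∧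
        A ∪ B = ({v}ᶜ : Set (Fin n)) ∧ ∀ a ∈ A, ∀ b ∈ B, ¬ G.Adj a b := by
  rintro - ⟨v, A, B, hA, hB, hAB, hunion, hsep⟩
  lift A to Finset (Fin n) using A.toFinite
  lift B to Finset (Fin n) using B.toFinite
  wlog hle : #A ≤ #B generalizing A B
  · exact this B hB A hA hAB.symm (by rwa [Set.union_comm])
      (fun b hb a ha h ↦ hsep a ha b hb h.symm) (by omega)
  have hcard : #A + #B + 1 = n := by
    have := congrArg Set.ncard hunion
    rw [Set.ncard_union_eq hAB, Set.ncard_compl, Set.ncard_singleton, Nat.card_eq_fintype_card,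
      Fintype.card_fin, Set.ncard_coe_finset, Set.ncard_coe_finset] at this
    omega
  rw [coe_nonempty] at hA
  have hpos : 0 < #A := hA.card_pos
  have hdeg : ∀ i ∈ A.map σ.symm.toEmbedding, d i ≤ #A := by
    simp only [mem_map_equiv, Equiv.symm_symm]
    intro i hi
    rw [← hreal]
    exact degree_le_card_of_neighborSet_subset hi
      (neighborSet_subset_insert_of_separates hunion hsep hi)
  have hds : d ⟨n - #A, by omega⟩ ≤ #A :=
    hd.le_of_le_add_card hA.map hdeg (by rw [card_map, Fin.val_mk]; omega)
  exact (hbig #A hpos ((hd (Fin.mk_le_mk.2 (by omega))).trans hds) (by omega)).not_ge hds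
end
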